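/- Let X_1,...,X_m be i.i.d. CCP(n) random variables and X_max = max_j X_j. Then for all x ≥ 0 and n ≥ 2, Pr[|X_max/n − ln n| > x] ≤ (2+m) e^{-x}. -/

import Mathlib

/-!
Upper tail: a collector still misses coupon `i` after `T` draws with probability
`(1 - 1/n)^T`, so by the union bound `P(X_max > T) ≤ m n (1 - 1/n)^T`. At
`T = ⌊n (log n + x)⌋` this is at most `m e^{-x}` as soon as `log n + x ≥ 2`; the estimate
`-log (1 - 1/n) ≥ 1/n + 1/(2n²) + 1/(3n³)` pays for the rounding.

Lower tail, by the second moment method: the number `N` of coupons one collector misses in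
its first `t` draws has `E N = n (1 - 1/n)^t =: u` and `E N² ≤ u + u²` (missing two given
coupons is negatively correlated), so `P(X ≤ t) ≤ P(N = 0) ≤ Var N / u² ≤ 1/u`, which is
at most `2 e^{-x}` for `t ≤ n (log n - x)`.

Otherwise either `(2 + m) e^{-x} ≥ 1`, or `n = 2`, `m = 1` and `x > log 3`, where the lower
tail is empty.
-/

open MeasureTheory ProbabilityTheory

/-- The coupon collector time: the first time `t` such that every coupon in `Fin n`
has appeared among the draws `d 0, ..., d (t-1)`. -/
noncomputable def coverTime {Ω : Type} {n : ℕ} (d : ℕ → Ω → Fin n) (ω : Ω) : ℕ :=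
  sInf {t | ∀ j : Fin n, ∃ s < t, d s ω = j}

open Real Finset
open scoped ENNReal

lemma add_sq_div_two_add_cube_div_three_le_neg_log_one_sub {t : ℝ} (h0 : 0 ≤ t) (h1 : t < 1) :
    t + t ^ 2 / 2 + t ^ 3 / 3 ≤ -log (1 - t) := by
  have hsum := hasSum_pow_div_log_of_abs_lt_one (abs_lt.2 ⟨by linarith, h1⟩)
  have := sum_le_hasSum (range 3) (fun k _ => by positivity) hsum
  norm_num [sum_range_succ] at this
  linarith

lemma pow_eq_exp_mul_log {q : ℝ} (hq : 0 < q) (k : ℕ) : q ^ k = exp (k * log q) := by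
  rw [exp_nat_mul, exp_log hq]

lemma one_sub_inv_pow_floor_le_two_mul_exp_neg {a : ℝ} (ha : 2 ≤ a) (y : ℝ) :
    (1 - 1 / a) ^ ⌊a * y⌋₊ ≤ 2 * exp (-y) := by
  have hq : 0 < 1 - 1 / a := by rw [sub_pos, div_lt_one] <;> linarith
  have hlog : a * log (1 - 1 / a) ≤ -1 := by
    have := mul_le_mul_of_nonneg_left (log_le_sub_one_of_pos hq) (by linarith : (0:ℝ) ≤ a)
    rwa [sub_sub_cancel_left, mul_neg, mul_one_div_cancel (by linarith)] at this
  have hlog2 : -log 2 ≤ log (1 - 1 / a) := by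
    rw [← log_inv, log_le_log_iff (by norm_num) hq, le_sub_comm, div_le_iff₀ (by linarith)]
    linarith
  have hT := Nat.sub_one_lt_floor (a * y)
  calc (1 - 1 / a) ^ ⌊a * y⌋₊ = exp (⌊a * y⌋₊ * log (1 - 1 / a)) :=
        pow_eq_exp_mul_log hq _
    _ ≤ exp (log 2 + -y) := exp_le_exp.2 (by nlinarith)
    _ = 2 * exp (-y) := by rw [exp_add, exp_log two_pos]

lemma one_sub_inv_pow_floor_le_exp_neg {a y : ℝ} (ha : 2 ≤ a) (hy : 2 ≤ y) :
    (1 - 1 / a) ^ ⌊a * y⌋₊ ≤ exp (-y) := by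
  set s := 1 / a with hs
  have hs0 : 0 < s := by positivity
  have hs2 : s ≤ 1 / 2 := by rw [hs]; gcongr
  have has : a * s = 1 := by rw [hs]; field_simp
  have hc := add_sq_div_two_add_cube_div_three_le_neg_log_one_sub hs0.le (by linarith)
  -- after multiplying by `s`, the gap is `s³(1 - 2s)/6 + (y - 2)(s²/2 + s³/3) ≥ 0`
  have hsy : s * y ≤ (y - s) * (s + s ^ 2 / 2 + s ^ 3 / 3) := by
    nlinarith [mul_nonneg (mul_nonneg hs0.le (sq_nonneg s)) (by linarith : 0 ≤ 1 - 2 * s),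
      mul_nonneg (by linarith : 0 ≤ y - 2) (by positivity : 0 ≤ s ^ 2 / 2 + s ^ 3 / 3)]
  have hy' : y ≤ (a * y - 1) * -log (1 - s) := by
    have e : a * y - 1 = a * (y - s) := by rw [mul_sub, has]
    have hys : 0 ≤ y - s := by linarith
    calc y = a * (s * y) := by rw [← mul_assoc, has, one_mul]
      _ ≤ a * ((y - s) * (s + s ^ 2 / 2 + s ^ 3 / 3)) := by gcongr
      _ ≤ (a * y - 1) * -log (1 - s) := by rw [e, mul_assoc]; gcongr
  have hT := Nat.sub_one_lt_floor (a * y)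
  have hc0 : 0 ≤ -log (1 - s) := le_trans (by positivity) hc
  rw [pow_eq_exp_mul_log (by linarith), exp_le_exp]
  nlinarith [mul_le_mul_of_nonneg_right hT.le hc0]

lemma log_natCast_le_sub_one_mul_log_two {n : ℕ} (hn : 1 ≤ n) :
    log n ≤ ((n : ℝ) - 1) * log 2 := by
  have h := one_add_mul_le_pow (a := (1 : ℝ)) (by norm_num) (n - 1)
  rw [Nat.cast_sub hn, Nat.cast_one, one_add_one_eq_two] at h
  have := log_le_log (by positivity) (by linarith : (n : ℝ) ≤ 2 ^ (n - 1))
  rwa [log_pow, Nat.cast_sub hn, Nat.cast_one] at this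

lemma exp_le_two_mul_mul_one_sub_inv_pow {n : ℕ} (hn : 2 ≤ n) {x : ℝ} (hx : 0 ≤ x) {t : ℕ}
    (ht : (t : ℝ) ≤ n * (log n - x)) : exp x ≤ 2 * n * (1 - 1 / n) ^ t := by
  have hnR : (2 : ℝ) ≤ n := by exact_mod_cast hn
  have hq : 0 < 1 - 1 / (n : ℝ) := by rw [sub_pos, div_lt_one] <;> linarith
  have hlogq : -(1 / ((n : ℝ) - 1)) ≤ log (1 - 1 / n) := by
    have := one_sub_inv_le_log_of_pos hq
    have e : 1 - (1 - 1 / (n : ℝ))⁻¹ = -(1 / ((n : ℝ) - 1)) := by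
      have : (n : ℝ) - 1 ≠ 0 := by linarith
      field_simp; ring
    linarith
  have hlogn := log_natCast_le_sub_one_mul_log_two (n := n) (by omega)
  have h1 : (t : ℝ) / ((n : ℝ) - 1) ≤ n * (log n - x) / ((n : ℝ) - 1) := by
    gcongr; linarith
  have h2 : -((t : ℝ) / ((n : ℝ) - 1)) ≤ t * log (1 - 1 / n) := by
    have := mul_le_mul_of_nonneg_left hlogq (Nat.cast_nonneg t)
    linarith [show (t:ℝ) * -(1 / ((n:ℝ) - 1)) = -((t : ℝ) / ((n : ℝ) - 1)) by ring]
  have h3 : x ≤ log 2 + log n - n * (log n - x) / ((n : ℝ) - 1) := by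
    rw [le_sub_iff_add_le, ← le_sub_iff_add_le', div_le_iff₀ (by linarith)]
    nlinarith
  calc exp x ≤ exp (log 2 + log n + t * log (1 - 1 / n)) := exp_le_exp.2 (by linarith)
    _ = 2 * n * (1 - 1 / n) ^ t := by
      rw [exp_add, exp_add, exp_log two_pos, exp_log (by positivity), pow_eq_exp_mul_log hq]

lemma measureReal_nonpos_le_variance_div_sq {Ω : Type*} [MeasurableSpace Ω] {μ : Measure Ω}
    [IsFiniteMeasure μ] {X : Ω → ℝ} (hX : MemLp X 2 μ) (h : 0 < μ[X]) :
    μ.real {ω | X ω ≤ 0} ≤ variance X μ / μ[X] ^ 2 := by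
  have hsub : {ω | X ω ≤ 0} ⊆ {ω | μ[X] ≤ |X ω - μ[X]|} := fun ω (hω : X ω ≤ 0) =>
    show μ[X] ≤ |X ω - μ[X]| by rw [abs_sub_comm]; exact le_abs.2 (Or.inl (by linarith))
  calc μ.real {ω | X ω ≤ 0} ≤ μ.real {ω | μ[X] ≤ |X ω - μ[X]|} :=
        measureReal_mono hsub
    _ ≤ variance X μ / μ[X] ^ 2 := ENNReal.toReal_le_of_le_ofReal
      (div_nonneg (variance_nonneg X μ) (sq_nonneg _)) (meas_ge_le_variance_div_sq hX h)

lemma measureReal_lt_abs_div_sub_le {Ω : Type*} [MeasurableSpace Ω] {μ : Measure Ω}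
    [IsFiniteMeasure μ] (Y : Ω → ℝ) {a : ℝ} (ha : 0 < a) (L x : ℝ) :
    μ.real {ω | x < |Y ω / a - L|}
      ≤ μ.real {ω | a * (L + x) < Y ω} + μ.real {ω | Y ω < a * (L - x)} := by
  refine (measureReal_mono fun ω (hω : x < |Y ω / a - L|) => ?_).trans (measureReal_union_le _ _)
  rcases lt_abs.1 hω with h | h
  · exact Or.inl (show a * (L + x) < Y ω by rw [← lt_div_iff₀' ha]; linarith)
  · exact Or.inr (show Y ω < a * (L - x) by rw [← div_lt_iff₀' ha]; linarith)

lemma setOf_natCast_lt_eq_empty {α : Type*} {Y : α → ℕ} {b : ℝ} (hb : b ≤ 0) :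
    {ω | (Y ω : ℝ) < b} = ∅ :=
  Set.eq_empty_of_forall_notMem fun ω (hω : (Y ω : ℝ) < b) => by
    linarith [Nat.cast_nonneg (α := ℝ) (Y ω)]

section CouponCollector

variable {Ω : Type} {n : ℕ} {d : ℕ → Ω → Fin n}

def missesBefore (d : ℕ → Ω → Fin n) (t : ℕ) (A : Finset (Fin n)) : Set Ω :=
  {ω | ∀ s < t, d s ω ∉ A}

lemma missesBefore_inter (t : ℕ) (A B : Finset (Fin n)) :
    missesBefore d t A ∩ missesBefore d t B = missesBefore d t (A ∪ B) := by
  ext ω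
  simp [missesBefore, forall_and]

lemma missesBefore_eq_biInter (t : ℕ) (A : Finset (Fin n)) :
    missesBefore d t A = ⋂ s ∈ range t, d s ⁻¹' (↑A)ᶜ := by
  ext ω; simp [missesBefore]

lemma coverTime_le_of_forall_exists_lt {ω : Ω} {t : ℕ} (h : ∀ i, ∃ s < t, d s ω = i) :
    coverTime d ω ≤ t :=
  Nat.sInf_le h

-- `coverTime` is `sInf ∅ = 0` when some coupon never appears, hence the hypothesis `hall`.
lemma forall_exists_lt_of_coverTime_le {ω : Ω} {t : ℕ} (hall : ∀ i, ∃ s, d s ω = i)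
    (h : coverTime d ω ≤ t) : ∀ i, ∃ s < t, d s ω = i := by
  choose f hf using hall
  have hne : {t | ∀ i, ∃ s < t, d s ω = i}.Nonempty :=
    ⟨univ.sup f + 1, fun i => ⟨f i, Nat.lt_succ_of_le (le_sup (mem_univ i)), hf i⟩⟩
  intro i
  obtain ⟨s, hs, hdi⟩ := Nat.sInf_mem hne i
  exact ⟨s, hs.trans_le h, hdi⟩

lemma setOf_lt_coverTime_subset (t : ℕ) :
    {ω | t < coverTime d ω} ⊆ ⋃ i, missesBefore d t {i} := by
  intro ω hω
  contrapose! hω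
  simp only [Set.mem_iUnion, not_exists] at hω
  exact (coverTime_le_of_forall_exists_lt fun i => by simpa [missesBefore] using hω i).not_gt

noncomputable def missedCount (d : ℕ → Ω → Fin n) (t : ℕ) (ω : Ω) : ℝ :=
  ∑ i, (missesBefore d t {i}).indicator 1 ω

lemma missedCount_eq_zero {ω : Ω} {t : ℕ} (h : ∀ i, ∃ s < t, d s ω = i) :
    missedCount d t ω = 0 :=
  sum_eq_zero fun i _ => Set.indicator_of_notMem (by simpa [missesBefore] using h i) _

lemma missedCount_sq (t : ℕ) (ω : Ω) :
    missedCount d t ω ^ 2 = ∑ i, ∑ j, (missesBefore d t ({i} ∪ {j})).indicator 1 ω := by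
  simp_rw [missedCount, sq, sum_mul_sum, ← missesBefore_inter, Set.inter_indicator_one]
  rfl

-- For `i ≠ j`: missing both `i` and `j` is at most as likely as missing them independently.
lemma one_sub_card_pair_div_pow_le (i j : Fin n) (t : ℕ) :
    (1 - (#({i} ∪ {j}) : ℝ) / n) ^ t
      ≤ ((1 - 1 / n) ^ t) ^ 2 + if i = j then (1 - 1 / (n : ℝ)) ^ t else 0 := by
  have hn : (1 : ℝ) ≤ n := by exact_mod_cast i.pos
  split_ifs with hij
  · subst hij
    have : 0 ≤ 1 - 1 / (n : ℝ) := by rw [sub_nonneg, div_le_one] <;> linarith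
    simp only [union_self, card_singleton, Nat.cast_one]
    nlinarith [pow_nonneg this t]
  · have hn2 : (2 : ℝ) ≤ n := by exact_mod_cast (show 2 ≤ n by omega)
    have hcard : (#({i} ∪ {j}) : ℝ) = 2 := by
      rw [card_union_of_disjoint (disjoint_singleton.2 hij)]; norm_num
    rw [hcard, add_zero, ← pow_mul, mul_comm, pow_mul]
    refine pow_le_pow_left₀ ?_ ?_ t
    · rw [sub_nonneg, div_le_one] <;> linarith
    · linear_combination sq_nonneg (1 / (n : ℝ))

variable [MeasurableSpace Ω] {μ : Measure Ω}

structure IsUniformDraws (d : ℕ → Ω → Fin n) (μ : Measure Ω) : Prop where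
  measurable : ∀ t, Measurable (d t)
  measure_eq : ∀ t i, μ {ω | d t ω = i} = (n : ℝ≥0∞)⁻¹
  iIndepFun : iIndepFun d μ

namespace IsUniformDraws

lemma measurableSet_missesBefore (hd : IsUniformDraws d μ) (t : ℕ) (A : Finset (Fin n)) :
    MeasurableSet (missesBefore d t A) := by
  rw [missesBefore_eq_biInter]
  exact Finset.measurableSet_biInter _ fun s _ => hd.measurable s (Set.toFinite _).measurableSet

variable [IsProbabilityMeasure μ]

lemma measureReal_preimage (hd : IsUniformDraws d μ) (t : ℕ) (A : Finset (Fin n)) :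
    μ.real (d t ⁻¹' A) = #A / n := by
  rw [← sum_measureReal_preimage_singleton A
    (fun i _ => hd.measurable t (measurableSet_singleton i))]
  simp [measureReal_def, Set.preimage, hd.measure_eq t, div_eq_mul_inv]

lemma measureReal_missesBefore (hd : IsUniformDraws d μ) (t : ℕ) (A : Finset (Fin n)) :
    μ.real (missesBefore d t A) = (1 - #A / n) ^ t := by
  rw [missesBefore_eq_biInter, measureReal_def, hd.iIndepFun.meas_biInter
    (fun s _ => ⟨(↑A)ᶜ, (Set.toFinite _).measurableSet, rfl⟩), ENNReal.toReal_prod]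
  simp_rw [← measureReal_def, Set.preimage_compl,
    probReal_compl_eq_one_sub (hd.measurable _ (Set.toFinite _).measurableSet),
    hd.measureReal_preimage]
  rw [prod_const, card_range]

lemma measureReal_lt_coverTime_le (hd : IsUniformDraws d μ) (t : ℕ) :
    μ.real {ω | t < coverTime d ω} ≤ n * (1 - 1 / n) ^ t :=
  calc μ.real {ω | t < coverTime d ω} ≤ μ.real (⋃ i, missesBefore d t {i}) :=
        measureReal_mono (setOf_lt_coverTime_subset t)
    _ ≤ ∑ i, μ.real (missesBefore d t {i}) := measureReal_iUnion_fintype_le _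
    _ = n * (1 - 1 / n) ^ t := by simp [hd.measureReal_missesBefore]

lemma ae_forall_exists_eq (hd : IsUniformDraws d μ) :
    ∀ᵐ ω ∂μ, ∀ i, ∃ s, d s ω = i := by
  refine ae_all_iff.2 fun i => ?_
  have hn : (1 : ℝ) ≤ n := by exact_mod_cast i.pos
  have hle : ∀ t, μ.real {ω | ¬∃ s, d s ω = i} ≤ (1 - 1 / n) ^ t := fun t =>
    calc μ.real {ω | ¬∃ s, d s ω = i} ≤ μ.real (missesBefore d t {i}) :=
          measureReal_mono fun ω hω s _ => by simpa using not_exists.1 hω s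
      _ = (1 - 1 / n) ^ t := by simp [hd.measureReal_missesBefore]
  have hlim := tendsto_pow_atTop_nhds_zero_of_lt_one (r := 1 - 1 / (n : ℝ))
    (by rw [sub_nonneg, div_le_one] <;> linarith) (sub_lt_self 1 (by positivity))
  rw [ae_iff, ← measureReal_eq_zero_iff]
  exact le_antisymm (ge_of_tendsto hlim (Filter.Eventually.of_forall hle)) measureReal_nonneg

lemma memLp_missedCount (hd : IsUniformDraws d μ) (t : ℕ) (p : ℝ≥0∞) :
    MemLp (missedCount d t) p μ :=
  memLp_finsetSum _ fun i _ => (memLp_const 1).indicator (hd.measurableSet_missesBefore t {i})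

lemma integral_missedCount (hd : IsUniformDraws d μ) (t : ℕ) :
    μ[missedCount d t] = (n : ℝ) * (1 - 1 / n) ^ t := by
  unfold missedCount
  rw [integral_finsetSum _ fun i _ =>
    (integrable_const 1).indicator (hd.measurableSet_missesBefore t {i})]
  simp [integral_indicator_one (hd.measurableSet_missesBefore _ _), hd.measureReal_missesBefore]

lemma integral_missedCount_sq_le (hd : IsUniformDraws d μ) (t : ℕ) :
    μ[missedCount d t ^ 2] ≤ μ[missedCount d t] + μ[missedCount d t] ^ 2 := by
  have hint (i j : Fin n) :
      Integrable ((missesBefore d t ({i} ∪ {j})).indicator (1 : Ω → ℝ)) μ :=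
    (integrable_const 1).indicator (hd.measurableSet_missesBefore t _)
  simp_rw [Pi.pow_apply, missedCount_sq, integral_finsetSum _ fun i _ =>
    integrable_finsetSum _ fun j _ => hint i j, integral_finsetSum _ fun j _ => hint _ j,
    integral_indicator_one (hd.measurableSet_missesBefore _ _), hd.measureReal_missesBefore,
    hd.integral_missedCount]
  refine (sum_le_sum fun i _ => sum_le_sum fun j _ => one_sub_card_pair_div_pow_le i j t).trans ?_
  simp only [sum_add_distrib, sum_const, card_univ, Fintype.card_fin, nsmul_eq_mul, sum_ite_eq,
    mem_univ, if_true]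
  exact le_of_eq (by ring)

lemma mul_measureReal_coverTime_le_le_one (hd : IsUniformDraws d μ) (t : ℕ) :
    n * (1 - 1 / n) ^ t * μ.real {ω | coverTime d ω ≤ t} ≤ 1 := by
  set u : ℝ := n * (1 - 1 / n) ^ t
  rcases le_or_gt u 0 with hu | hu
  · exact (mul_nonpos_of_nonpos_of_nonneg hu measureReal_nonneg).trans zero_le_one
  have hmean := hd.integral_missedCount t
  have hvar : variance (missedCount d t) μ ≤ u := by
    rw [variance_eq_sub (hd.memLp_missedCount t 2)]
    linarith [hd.integral_missedCount_sq_le t]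
  have hae : {ω | coverTime d ω ≤ t} ≤ᵐ[μ] {ω | missedCount d t ω ≤ 0} := by
    filter_upwards [hd.ae_forall_exists_eq] with ω hall hω
    exact (missedCount_eq_zero (forall_exists_lt_of_coverTime_le hall hω)).le
  calc u * μ.real {ω | coverTime d ω ≤ t} ≤ u * μ.real {ω | missedCount d t ω ≤ 0} := by
        exact mul_le_mul_of_nonneg_left
          (ENNReal.toReal_mono (measure_ne_top _ _) (measure_mono_ae hae)) hu.le
    _ ≤ u * (u / u ^ 2) := by
        gcongr
        refine (measureReal_nonpos_le_variance_div_sq (hd.memLp_missedCount t 2) ?_).trans ?_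
        · rwa [hmean]
        · rw [hmean]; gcongr
    _ = 1 := by field_simp

end IsUniformDraws

end CouponCollector

section SeveralCollectors

variable {Ω : Type} [MeasurableSpace Ω] {μ : Measure Ω} [IsProbabilityMeasure μ] {n : ℕ}
  {ι : Type*} [Fintype ι] {d : ι → ℕ → Ω → Fin n}

lemma measureReal_lt_sup_coverTime_le (hd : ∀ j, IsUniformDraws (d j) μ) {a : ℝ}
    (ha : 0 ≤ a) :
    μ.real {ω | a < (univ.sup fun j => coverTime (d j) ω : ℕ)}
      ≤ Fintype.card ι * ((n : ℝ) * (1 - 1 / n) ^ ⌊a⌋₊) :=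
  calc μ.real {ω | a < (univ.sup fun j => coverTime (d j) ω : ℕ)}
      ≤ μ.real (⋃ j, {ω | ⌊a⌋₊ < coverTime (d j) ω}) :=
        measureReal_mono fun ω hω =>
          let ⟨j, _, hj⟩ := Finset.lt_sup_iff.1 ((Nat.floor_lt ha).2 hω)
          Set.mem_iUnion.2 ⟨j, hj⟩
    _ ≤ ∑ j, μ.real {ω | ⌊a⌋₊ < coverTime (d j) ω} := measureReal_iUnion_fintype_le _
    _ ≤ ∑ _j : ι, (n : ℝ) * (1 - 1 / n) ^ ⌊a⌋₊ :=
        sum_le_sum fun j _ => (hd j).measureReal_lt_coverTime_le _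
    _ = Fintype.card ι * ((n : ℝ) * (1 - 1 / n) ^ ⌊a⌋₊) := by simp

lemma measureReal_sup_coverTime_lt_le [Nonempty ι] (hd : ∀ j, IsUniformDraws (d j) μ)
    (hn : 2 ≤ n) {x : ℝ} (hx : 0 ≤ x) :
    μ.real {ω | ((univ.sup fun j => coverTime (d j) ω : ℕ) : ℝ) < n * (log n - x)}
      ≤ 2 * exp (-x) := by
  set b : ℝ := n * (log n - x)
  obtain ⟨j⟩ := ‹Nonempty ι›
  rcases lt_or_ge b 0 with hb | hb
  · rw [setOf_natCast_lt_eq_empty hb.le, measureReal_empty]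
    positivity
  set t := ⌊b⌋₊
  set u : ℝ := n * (1 - 1 / n) ^ t
  have hsub : {ω | ((univ.sup fun j => coverTime (d j) ω : ℕ) : ℝ) < b}
      ⊆ {ω | coverTime (d j) ω ≤ t} := fun ω (hω : _ < b) =>
    Nat.le_floor ((Nat.cast_le.2 (le_sup (f := fun j => coverTime (d j) ω) (mem_univ j))).trans
      hω.le)
  have hexp : exp x ≤ 2 * u := by
    rw [← mul_assoc]; exact exp_le_two_mul_mul_one_sub_inv_pow hn hx (Nat.floor_le hb)
  have hprob : u * μ.real {ω | coverTime (d j) ω ≤ t} ≤ 1 :=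
    (hd j).mul_measureReal_coverTime_le_le_one t
  rw [exp_neg, ← div_eq_mul_inv, le_div_iff₀ (exp_pos x)]
  calc _ ≤ μ.real {ω | coverTime (d j) ω ≤ t} * (2 * u) :=
        mul_le_mul (measureReal_mono hsub) hexp (exp_pos x).le measureReal_nonneg
    _ ≤ 2 := by linarith

end SeveralCollectors

lemma eq_two_and_eq_one_of_log_add_lt_two {n m : ℕ} (hn : 2 ≤ n) (hm : 0 < m) {x : ℝ}
    (hx : 2 + m < exp x) (hy : log n + x < 2) : n = 2 ∧ m = 1 := by
  have he : exp 2 < 8 := by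
    have := exp_one_lt_d9
    calc exp 2 = exp 1 ^ 2 := by rw [← exp_nat_mul]; norm_num
      _ < 8 := by nlinarith [exp_pos 1]
  have hnpos : (0 : ℝ) < n := by positivity
  have : ((n * (2 + m) : ℕ) : ℝ) < 8 := by
    calc ((n * (2 + m) : ℕ) : ℝ) = n * (2 + m) := by push_cast; ring
      _ < n * exp x := by gcongr
      _ = exp (log n + x) := by rw [exp_add, exp_log hnpos]
      _ < 8 := (exp_lt_exp.2 hy).trans he
  have : n * (2 + m) < 8 := by exact_mod_cast this
  constructor <;> nlinarith

lemma le_two_add_mul_exp_neg {n m : ℕ} (hn : 2 ≤ n) (hm : 0 < m) {x p l : ℝ} (hp1 : p ≤ 1)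
    (hp : p ≤ m * (n * (1 - 1 / n) ^ ⌊n * (log n + x)⌋₊) + l) (hl : l ≤ 2 * exp (-x))
    (hl0 : log n < x → l = 0) : p ≤ (2 + m) * exp (-x) := by
  have hnR : (2 : ℝ) ≤ n := by exact_mod_cast hn
  have hscale : (n : ℝ) * exp (-(log n + x)) = exp (-x) := by
    rw [neg_add, exp_add, exp_neg (log n), exp_log (by linarith),
      mul_inv_cancel_left₀ (by linarith)]
  rcases le_or_gt 1 ((2 + m) * exp (-x)) with htriv | hsmall
  · exact hp1.trans htriv
  have hex : 2 + m < exp x := by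
    rwa [exp_neg, ← div_eq_mul_inv, div_lt_one (exp_pos x)] at hsmall
  rcases le_or_gt 2 (log n + x) with hy | hy
  · have hq : (n : ℝ) * (1 - 1 / n) ^ ⌊n * (log n + x)⌋₊ ≤ exp (-x) := by
      rw [← hscale]
      exact mul_le_mul_of_nonneg_left (one_sub_inv_pow_floor_le_exp_neg hnR hy) (by linarith)
    nlinarith [mul_le_mul_of_nonneg_left hq (Nat.cast_nonneg (α := ℝ) m)]
  · -- `n = 2`, `m = 1` and `x > log 3`: the lower tail `l` vanishes
    obtain ⟨hn2, hm1⟩ := eq_two_and_eq_one_of_log_add_lt_two hn hm hex hy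
    have hlog : log n < x := by
      refine (log_lt_log (by positivity) ?_).trans ((log_lt_iff_lt_exp (by positivity)).2 hex)
      simp [hn2, hm1]
    have hq : (n : ℝ) * (1 - 1 / n) ^ ⌊n * (log n + x)⌋₊ ≤ 2 * exp (-x) := by
      rw [← hscale, mul_left_comm]
      exact mul_le_mul_of_nonneg_left (one_sub_inv_pow_floor_le_two_mul_exp_neg hnR _) (by linarith)
    rw [hl0 hlog, hm1, Nat.cast_one, one_mul, add_zero] at hp
    rw [hm1, Nat.cast_one]
    nlinarith [exp_pos (-x)]

/-- For `X_1, ..., X_m` i.i.d. `CCP(n)` random variables with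
`X_max = max_j X_j`, all `x ≥ 0` and `n ≥ 2`,
`Pr[|X_max/n − ln n| > x] ≤ (2+m) e^{-x}`. -/
theorem ccp_max_two_sided_tail {Ω : Type} [MeasurableSpace Ω] (μ : Measure Ω)
    [IsProbabilityMeasure μ] {n m : ℕ} (hn : 2 ≤ n) (hm : 0 < m)
    (d : Fin m → ℕ → Ω → Fin n)
    (hmeas : ∀ j t, Measurable (d j t))
    (hunif : ∀ j t i, μ {ω | d j t ω = i} = (n : ENNReal)⁻¹)
    (hindep : iIndepFun
      (fun p : Fin m × ℕ => d p.1 p.2) μ)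
    {x : ℝ} (hx : 0 ≤ x) :
    (μ {ω | x < |((Finset.univ.sup fun j => coverTime (d j) ω : ℕ) : ℝ) / n
        - Real.log n|}).toReal ≤ (2 + m) * Real.exp (-x) := by
  have hd (j : Fin m) : IsUniformDraws (d j) μ :=
    ⟨hmeas j, hunif j, (hindep.precomp (Prod.mk_right_injective j) :)⟩
  have : Nonempty (Fin m) := ⟨⟨0, hm⟩⟩
  have hn0 : (0 : ℝ) < n := by exact_mod_cast (by omega : 0 < n)
  have hsplit := measureReal_lt_abs_div_sub_le (μ := μ)
    (fun ω => ((univ.sup fun j => coverTime (d j) ω : ℕ) : ℝ)) hn0 (log n) x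
  have hup := measureReal_lt_sup_coverTime_le hd (a := n * (log n + x))
    (by have := log_nonneg (Nat.one_le_cast.2 (by omega : 1 ≤ n)); positivity)
  rw [Fintype.card_fin] at hup
  refine le_two_add_mul_exp_neg hn hm measureReal_le_one (hsplit.trans (by gcongr))
    (measureReal_sup_coverTime_lt_le hd hn hx) fun hlog => ?_
  rw [setOf_natCast_lt_eq_empty (by nlinarith), measureReal_empty]
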